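/- In Algorithm 3's Switch_Policy procedure for catching a target stationary policy π in a communicating MDP satisfying the do-nothing assumption, conditioned on the procedure terminating at time t (T_switch = t), the distribution of the current state equals the distribution of the state of π followed from the start of the interaction: Pr[S_t = s | T_switch = t] = d_π^t(s) for every state s. -/
import Mathlib


open MeasureTheory ProbabilityTheory
open scoped ENNReal

/-- `stateDist P d1 π t` is the distribution over states at time `t` (with time `0` the
start of the interaction) when the initial state is drawn from `d1` and the stationary
deterministic policy `π` is followed in the MDP with transition kernel `P`; this is the
distribution denoted `d_π^t` in the paper. -/
noncomputable def stateDist {S A : Type*} [Fintype S] (P : S → A → S → ℝ) (d1 : S → ℝ)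
    (π : S → A) : ℕ → S → ℝ
  | 0 => d1
  | t + 1 => fun s' => ∑ s, stateDist P d1 π t s * P s (π s) s'

/-- `hatLoss P d1 ℓ π t = ℓ̂_t(π)`, the expected loss at time `t` of following the
stationary deterministic policy `π` from the start of the interaction
(`s_1 ∼ d1`, `a_t = π(s_t)`). -/
noncomputable def hatLoss {S A : Type*} [Fintype S] (P : S → A → S → ℝ) (d1 : S → ℝ)
    (ℓ : ℕ → S → A → ℝ) (π : S → A) (t : ℕ) : ℝ :=
  ∑ s, stateDist P d1 π t s * ℓ t s (π s)

lemma stateDist_nonneg {S A : Type*} [Fintype S] (P : S → A → S → ℝ) (d1 : S → ℝ)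
    (hP0 : ∀ s a s', 0 ≤ P s a s') (hd10 : ∀ s, 0 ≤ d1 s) (π : S → A) :
    ∀ t s, 0 ≤ stateDist P d1 π t s := by
  intro t
  induction t with
  | zero => exact hd10
  | succ n ih =>
    intro s
    exact Finset.sum_nonneg fun x _ => mul_nonneg (ih x) (hP0 x (π x) s)

lemma stateDist_sum_one {S A : Type*} [Fintype S] (P : S → A → S → ℝ) (d1 : S → ℝ)
    (hP1 : ∀ s a, ∑ s', P s a s' = 1) (hd11 : ∑ s, d1 s = 1) (π : S → A) :
    ∀ t, ∑ s, stateDist P d1 π t s = 1 := by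
  intro t
  induction t with
  | zero => exact hd11
  | succ n ih =>
    show ∑ s', ∑ s, stateDist P d1 π n s * P s (π s) s' = 1
    rw [Finset.sum_comm]
    simp only [← Finset.mul_sum, hP1, mul_one]
    exact ih

/-- (Lemma 3 of the paper.)  In Algorithm 3's `Switch_Policy` procedure
for catching a target stationary policy `π`, conditioned on the procedure terminating at
time `t` (`T_switch = t`), the distribution of the current state equals the distribution
of the state of `π` followed from the start of the interaction:
`Pr[S_t = s | T_switch = t] = d_π^t(s)` for every state `s`.

The procedure is modelled by its defining probabilistic properties: on the final attempt
the chain is at `s*` at time `t - ℓ*`; a target `T_t` is sampled from `d_π^t` (given the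
past); the target `s` is reached at time `t` with probability `p_s`; and upon reaching the
target the procedure accepts with probability `p*/p_{S_t}` (Bernoulli rejection step),
terminating at time `t`. -/
theorem switch_policy_state_distribution
    {S A : Type*} [Fintype S] [Fintype A]
    (P : S → A → S → ℝ) (d1 : S → ℝ)
    (hP0 : ∀ s a s', 0 ≤ P s a s') (hP1 : ∀ s a, ∑ s', P s a s' = 1)
    (hd10 : ∀ s, 0 ≤ d1 s) (hd11 : ∑ s, d1 s = 1)
    (ℓ : ℕ → S → A → ℝ) (π : S → A) (sstar : S) (ellstar t : ℕ) (hLt : ellstar ≤ t)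
    (ps : S → ℝ) (pstar : ℝ) (hpstar : 0 < pstar)
    (hps : ∀ s, pstar ≤ ps s) (hps1 : ∀ s, ps s ≤ 1)
    (Ω : Type*) [MeasurableSpace Ω] (μ : Measure Ω) [IsProbabilityMeasure μ]
    -- `St` is the state process of the algorithm, `Tt` the sampled target state for the
    -- attempt ending at time `t`, and `Tsw` the (random) termination time `T_switch`
    (St : ℕ → Ω → S) (Tt : Ω → S) (Tsw : Ω → ℕ)
    (hStmeas : ∀ n s, MeasurableSet {ω | St n ω = s})
    (hTtmeas : ∀ s, MeasurableSet {ω | Tt ω = s})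
    (hTswmeas : ∀ n, MeasurableSet {ω | Tsw ω = n})
    -- the target is sampled from `d_π^t`, independently of being at `s*` at time `t - ℓ*`
    (hsample : ∀ s : S,
      μ ({ω | Tt ω = s} ∩ {ω | St (t - ellstar) ω = sstar}) =
        ENNReal.ofReal (stateDist P d1 π t s) * μ {ω | St (t - ellstar) ω = sstar})
    -- from `s*`, the target `s` is reached at time `t` with probability `p_s ≥ p*`
    (hreach : ∀ s : S,
      μ ({ω | St t ω = s} ∩ {ω | Tt ω = s} ∩ {ω | St (t - ellstar) ω = sstar}) =
        ENNReal.ofReal (ps s) * μ ({ω | Tt ω = s} ∩ {ω | St (t - ellstar) ω = sstar}))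
    -- having reached the target `s`, the procedure accepts (so `T_switch = t`) with
    -- probability `p*/p_s` (the Bernoulli rejection step)
    (haccept : ∀ s : S,
      μ ({ω | Tsw ω = t} ∩ ({ω | St t ω = s} ∩ {ω | Tt ω = s} ∩ {ω | St (t - ellstar) ω = sstar})) =
        ENNReal.ofReal (pstar / ps s) *
          μ ({ω | St t ω = s} ∩ {ω | Tt ω = s} ∩ {ω | St (t - ellstar) ω = sstar}))
    -- termination at time `t` only happens if the target was reached at time `t` on an
    -- attempt launched from `s*` at time `t - ℓ*`
    (hterm : ∀ ω, Tsw ω = t → St t ω = Tt ω ∧ St (t - ellstar) ω = sstar)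
    (hpos : μ {ω | Tsw ω = t} ≠ 0) :
    ∀ s : S, (μ[|{ω | Tsw ω = t}]) {ω | St t ω = s} =
      ENNReal.ofReal (stateDist P d1 π t s) := by
  -- proof
  classical
  set c := μ {ω | St (t - ellstar) ω = sstar} with hc
  set d : S → ℝ := fun s => stateDist P d1 π t s with hd
  have hd0 : ∀ s, 0 ≤ d s := stateDist_nonneg P d1 hP0 hd10 π t
  have hd1 : ∑ s, d s = 1 := stateDist_sum_one P d1 hP1 hd11 π t
  have hpss : ∀ s, 0 < ps s := fun s => lt_of_lt_of_le hpstar (hps s)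
  -- key: the intersection identity
  have hkey : ∀ s : S, {ω | Tsw ω = t} ∩ {ω | St t ω = s} =
      {ω | Tsw ω = t} ∩ ({ω | St t ω = s} ∩ {ω | Tt ω = s} ∩ {ω | St (t - ellstar) ω = sstar}) := by
    intro s
    ext ω
    simp only [Set.mem_inter_iff, Set.mem_setOf_eq]
    constructor
    · rintro ⟨hw, hs⟩
      obtain ⟨h1, h2⟩ := hterm ω hw
      exact ⟨hw, ⟨hs, h1 ▸ hs⟩, h2⟩
    · rintro ⟨hw, ⟨hs, _⟩, _⟩
      exact ⟨hw, hs⟩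
  have hval : ∀ s : S, μ ({ω | Tsw ω = t} ∩ {ω | St t ω = s}) =
      ENNReal.ofReal pstar * ENNReal.ofReal (d s) * c := by
    intro s
    have h1 : ENNReal.ofReal (pstar / ps s) * ENNReal.ofReal (ps s) = ENNReal.ofReal pstar := by
      rw [← ENNReal.ofReal_mul (le_of_lt (div_pos hpstar (hpss s))),
        div_mul_cancel₀ _ (ne_of_gt (hpss s))]
    rw [hkey s, haccept s, hreach s, hsample s, ← mul_assoc, ← mul_assoc, h1]
  have hA : μ {ω | Tsw ω = t} = ENNReal.ofReal pstar * c := by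
    have hu : {ω | Tsw ω = t} = ⋃ s : S, {ω | Tsw ω = t} ∩ {ω | St t ω = s} := by
      ext ω
      simp only [Set.mem_iUnion, Set.mem_inter_iff, Set.mem_setOf_eq]
      exact ⟨fun h => ⟨St t ω, h, rfl⟩, fun ⟨_, h, _⟩ => h⟩
    rw [hu, measure_iUnion ?_ (fun s => (hTswmeas t).inter (hStmeas t s))]
    · rw [tsum_fintype]
      simp only [hval]
      rw [← Finset.sum_mul, ← Finset.mul_sum, ← ENNReal.ofReal_sum_of_nonneg
        (fun s _ => hd0 s), hd1]
      simp
    · intro i j hij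
      simp only [Function.onFun, Set.disjoint_left]
      rintro ω ⟨-, hi⟩ ⟨-, hj⟩
      exact hij (hi ▸ hj ▸ rfl)
  have hcne : c ≠ 0 := by
    intro h
    apply hpos
    rw [hA, h, mul_zero]
  have hcfin : c ≠ ⊤ := (measure_lt_top μ _).ne
  have hpne : ENNReal.ofReal pstar ≠ 0 := by
    simp [ENNReal.ofReal_eq_zero, not_le, hpstar]
  intro s
  rw [ProbabilityTheory.cond_apply (hTswmeas t), hA, hval s]
  rw [ENNReal.mul_inv (Or.inl hpne) (Or.inl ENNReal.ofReal_ne_top)]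
  calc (ENNReal.ofReal pstar)⁻¹ * c⁻¹ * (ENNReal.ofReal pstar * ENNReal.ofReal (d s) * c)
      = ENNReal.ofReal (d s) * ((ENNReal.ofReal pstar)⁻¹ * ENNReal.ofReal pstar)
        * (c⁻¹ * c) := by ring
    _ = ENNReal.ofReal (d s) := by
        rw [ENNReal.inv_mul_cancel hpne ENNReal.ofReal_ne_top,
          ENNReal.inv_mul_cancel hcne hcfin, mul_one, mul_one]
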